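/- arXiv:1802.01260 — 8 statements merged into one kernel-verified Lean document; each statement's English description precedes it below -/
import Mathlib

section
/- For every positive integer n, ∑_{k=1}^{n} (1 - q^{2k-n-1}) · q^{-C(n-2k+1,2)} / ([2k]^2 · binom_{q^2}(n,k)^2) = 0, i.e., the k-th and (n+1-k)-th summands cancel each other. -/
open Polynomial Finset

noncomputable def q : RatFunc ℚ := RatFunc.X

/-- `qpoch a b m = (a;b)_m = ∏_{j=0}^{m-1} (1 - a b^j)`. -/
noncomputable def qpoch (a b : RatFunc ℚ) (m : ℕ) : RatFunc ℚ :=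
  ∏ j ∈ Finset.range m, (1 - a * b ^ j)

/-- The q-integer `[m] = (1-q^m)/(1-q)` for any integer `m`. -/
noncomputable def qint (m : ℤ) : RatFunc ℚ := (1 - q ^ m) / (1 - q)

/-- Gaussian binomial coefficient in base `b`. -/
noncomputable def qbin (b : RatFunc ℚ) (M N : ℕ) : RatFunc ℚ :=
  if N ≤ M then qpoch b b M / (qpoch b b N * qpoch b b (M - N)) else 0

/-- `C2 a = a(a-1)/2`. -/
def C2 (a : ℤ) : ℤ := a * (a - 1) / 2

/-- The polynomial `[n] = 1 + q + ... + q^{n-1}` in `ℚ[q]`. -/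
noncomputable def qnPoly (n : ℕ) : Polynomial ℚ := ∑ i ∈ Finset.range n, X ^ i

/-- Congruence of rational functions modulo a polynomial: the reduced numerator of the
difference is divisible by `P` and the reduced denominator is coprime to `P`. -/
def congrMod (x y : RatFunc ℚ) (P : Polynomial ℚ) : Prop :=
  P ∣ (x - y).num ∧ IsCoprime ((x - y).denom) P

/-! Under `k ↦ n + 1 - k` the exponent `b = 2k - n - 1` changes sign, while
`[2k] · binom_{q²}(n, k) = (q²;q²)_n / ((1 - q) (q²;q²)_{k-1} (q²;q²)_{n-k})` is unchanged.
Since `C2 (-b) = C2 b + b`, the numerator `(1 - q^b) q^{-C2(-b)}` changes sign, so the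
`k`-th and `(n+1-k)`-th terms cancel. -/

theorem Finset.sum_Icc_eq_zero_of_neg_reflect {M : Type*} [AddCommGroup M] [IsAddTorsionFree M]
    {n : ℕ} {f : ℕ → M} (h : ∀ k ∈ Icc 1 n, f (n + 1 - k) = -f k) :
    ∑ k ∈ Icc 1 n, f k = 0 := by
  refine sum_involution (fun k _ => n + 1 - k) (fun k hk => by rw [h k hk, add_neg_cancel])
    (fun k hk hfk hfix => hfk ?_) (fun k hk => ?_) (fun k hk => ?_)
  · rw [← self_eq_neg, ← h k hk, hfix]
  · simp only [mem_Icc] at hk ⊢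
    omega
  · simp only [mem_Icc] at hk
    omega

theorem C2_neg (b : ℤ) : C2 (-b) = C2 b + b := by
  rw [C2, C2, show -b * (-b - 1) = b * (b - 1) + b * 2 by ring,
    Int.add_mul_ediv_right _ _ two_ne_zero]

theorem one_sub_zpow_neg_mul_zpow_neg_C2 {K : Type*} [Field K] {x : K} (hx : x ≠ 0) (b : ℤ) :
    (1 - x ^ (-b)) * x ^ (-C2 b) = -((1 - x ^ b) * x ^ (-C2 (-b))) := by
  have hshift : x ^ (-C2 b) = x ^ b * x ^ (-C2 (-b)) := by
    rw [← zpow_add₀ hx, C2_neg]; ring_nf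
  have hmul : x ^ (-b) * x ^ (-C2 b) = x ^ (-C2 (-b)) := by
    rw [← zpow_add₀ hx, C2_neg]; ring_nf
  linear_combination hshift - hmul

theorem one_sub_q_pow_ne_zero {m : ℕ} (hm : m ≠ 0) : (1 : RatFunc ℚ) - q ^ m ≠ 0 := by
  have hpoly : (1 : ℚ[X]) - X ^ m ≠ 0 := by
    rw [← neg_sub, neg_ne_zero, ← C_1]
    exact X_pow_sub_C_ne_zero (Nat.pos_of_ne_zero hm) 1
  simpa [q, RatFunc.algebraMap_X] using
    (map_ne_zero_iff _ (RatFunc.algebraMap_injective ℚ)).2 hpoly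

theorem qpoch_succ (a b : RatFunc ℚ) (m : ℕ) :
    qpoch a b (m + 1) = qpoch a b m * (1 - a * b ^ m) :=
  prod_range_succ _ _

theorem qpoch_q_sq_ne_zero (m : ℕ) : qpoch (q ^ 2) (q ^ 2) m ≠ 0 := by
  refine prod_ne_zero_iff.2 fun j _ => ?_
  rw [← pow_mul, ← pow_add]
  exact one_sub_q_pow_ne_zero (by omega)

theorem qint_two_mul_mul_qbin {n k : ℕ} (hkn : k + 1 ≤ n) :
    qint (2 * (k + 1 : ℕ)) * qbin (q ^ 2) n (k + 1) =
      qpoch (q ^ 2) (q ^ 2) n /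
        ((1 - q) * qpoch (q ^ 2) (q ^ 2) k * qpoch (q ^ 2) (q ^ 2) (n - (k + 1))) := by
  have h1q : (1 : RatFunc ℚ) - q ≠ 0 := by simpa using one_sub_q_pow_ne_zero one_ne_zero
  have hk2 := one_sub_q_pow_ne_zero (m := 2 * (k + 1)) (by omega)
  have hk := qpoch_q_sq_ne_zero k
  have hnk := qpoch_q_sq_ne_zero (n - (k + 1))
  have hpow : q ^ 2 * (q ^ 2) ^ k = q ^ (2 * (k + 1)) := by ring
  have hzpow : q ^ (2 * ((k + 1 : ℕ) : ℤ)) = q ^ (2 * (k + 1)) := by norm_cast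
  rw [qint, qbin, if_pos hkn, qpoch_succ, hpow, hzpow]
  field_simp

theorem qint_two_mul_mul_qbin_reflect {n k : ℕ} (hk1 : 1 ≤ k) (hkn : k ≤ n) :
    qint (2 * ((n + 1 - k : ℕ) : ℤ)) * qbin (q ^ 2) n (n + 1 - k) =
      qint (2 * (k : ℤ)) * qbin (q ^ 2) n k := by
  obtain ⟨j, rfl⟩ := Nat.exists_eq_add_of_le' hk1
  obtain ⟨i, rfl⟩ := Nat.exists_eq_add_of_le hkn
  rw [show j + 1 + i + 1 - (j + 1) = i + 1 by omega, qint_two_mul_mul_qbin (by omega),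
    qint_two_mul_mul_qbin (by omega), show j + 1 + i - (i + 1) = j by omega,
    show j + 1 + i - (j + 1) = i by omega]
  ring

theorem q_symmetry_cancel_general (n : ℕ) :
    ∑ k ∈ Finset.Icc 1 n,
        (1 - q ^ (2 * (k : ℤ) - n - 1)) * q ^ (-(C2 ((n : ℤ) - 2 * k + 1))) /
          (qint (2 * (k : ℤ)) ^ 2 * qbin (q ^ 2) n k ^ 2) = 0 := by
  refine sum_Icc_eq_zero_of_neg_reflect fun k hk => ?_
  obtain ⟨hk1, hkn⟩ := mem_Icc.1 hk
  have hcast : ((n + 1 - k : ℕ) : ℤ) = n + 1 - k := by omega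
  have hq : q ≠ 0 := RatFunc.X_ne_zero
  rw [← mul_pow, ← mul_pow, qint_two_mul_mul_qbin_reflect hk1 hkn, ← neg_div, hcast,
    show 2 * ((n : ℤ) + 1 - k) - n - 1 = -(2 * k - n - 1) by ring,
    show (n : ℤ) - 2 * (n + 1 - k) + 1 = 2 * k - n - 1 by ring,
    show (n : ℤ) - 2 * k + 1 = -(2 * k - n - 1) by ring,
    one_sub_zpow_neg_mul_zpow_neg_C2 hq]

theorem q_symmetry_cancel (n : ℕ) (hn : 0 < n) :
    ∑ k ∈ Finset.Icc 1 n,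
        (1 - q ^ (2 * (k : ℤ) - n - 1)) * q ^ (-(C2 ((n : ℤ) - 2 * k + 1))) /
          (qint (2 * (k : ℤ)) ^ 2 * qbin (q ^ 2) n k ^ 2) = 0 :=
  q_symmetry_cancel_general n
end

section
/- Define F(n,k) = ([n+1]/2) · binom_q(2n+1,n) · (1+q^{2k-n-1}) · q^{-C(n-2k+1,2)} / ([2k]^2 · binom_{q^2}(n,k)^2) and G(n,k) = -([3n-2k+5]/2) · binom_q(2n+1,n) · (1+q^{n+1}) · q^{-C(n-2k+3,2)} / ([2k]^2 · binom_{q^2}(n+1,k)^2). Then for all positive integers n and k with 1 ≤ k ≤ n, F(n+1,k) - F(n,k) = G(n,k+1) - G(n,k). -/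
open Polynomial Finset

noncomputable def F2 (n k : ℕ) : RatFunc ℚ :=
  (qint ((n : ℤ) + 1) / 2 * qbin q (2 * n + 1) n * (1 + q ^ (2 * (k : ℤ) - n - 1)) *
      q ^ (-(C2 ((n : ℤ) - 2 * k + 1)))) /
    (qint (2 * (k : ℤ)) ^ 2 * qbin (q ^ 2) n k ^ 2)

noncomputable def G2 (n k : ℕ) : RatFunc ℚ :=
  -((qint (3 * (n : ℤ) - 2 * k + 5) / 2 * qbin q (2 * n + 1) n * (1 + q ^ ((n : ℤ) + 1)) *
      q ^ (-(C2 ((n : ℤ) - 2 * k + 3)))) /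
    (qint (2 * (k : ℤ)) ^ 2 * qbin (q ^ 2) (n + 1) k ^ 2))

/-!
After dividing by the common factor `wzScale n k`, each of the four terms is a rational function
of `q`, `q ^ k` and `q ^ n`: the Gaussian binomials change by Pascal-type ratios, and the power of
`q` changes through `C2 (a + 1) = C2 a + a`. The WZ equation thus becomes a rational identity in
three independent variables, which holds over any field.
-/

theorem staver_rational_identity {K : Type*} [Field K] {q x y : K} (hq : q ≠ 0) (hx : x ≠ 0)
    (hy : y ≠ 0) (h1 : 1 - q * y ≠ 0) (h2 : 1 - x ^ 2 ≠ 0) (h3 : 1 - q ^ 2 * y ^ 2 ≠ 0) :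
    (q ^ 2 * y + x ^ 2) * (1 - q ^ 3 * y ^ 2) * (x ^ 2 - q ^ 2 * y ^ 2) ^ 2 /
        (q ^ 3 * y ^ 2 * x ^ 2 * (1 - x ^ 2) ^ 2 * (1 - q * y) * (1 - q ^ 2 * y ^ 2))
      - (1 - q * y) * (q * y + x ^ 2) / (q * y * (1 - x ^ 2) ^ 2)
    = -((x ^ 2 - q ^ 3 * y ^ 3) * (1 + q * y) / (x ^ 2 * (1 - q ^ 2 * y ^ 2) ^ 2))
      - -((x ^ 2 - q ^ 5 * y ^ 3) * (1 + q * y) * (x ^ 2 - q ^ 2 * y ^ 2) ^ 2 /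
          (q ^ 3 * y ^ 2 * x ^ 2 * (1 - x ^ 2) ^ 2 * (1 - q ^ 2 * y ^ 2) ^ 2)) := by
  field_simp
  ring

theorem q_ne_zero : q ≠ 0 := RatFunc.X_ne_zero

theorem q_pow_ne_one {m : ℕ} (hm : m ≠ 0) : q ^ m ≠ 1 := by
  intro h
  have h2 : (Polynomial.X ^ m : ℚ[X]) = 1 := by
    apply IsFractionRing.injective (ℚ[X]) (RatFunc ℚ)
    simpa [q, map_pow] using h
  simpa [hm] using congrArg Polynomial.natDegree h2

theorem q_sq_pow_ne_one {m : ℕ} (hm : m ≠ 0) : (q ^ 2) ^ m ≠ 1 := by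
  rw [← pow_mul]
  exact q_pow_ne_one (by omega)

theorem one_sub_pow_ne_zero {b : RatFunc ℚ} (hb : ∀ {m : ℕ}, m ≠ 0 → b ^ m ≠ 1)
    {m : ℕ} (hm : m ≠ 0) : 1 - b ^ m ≠ 0 :=
  sub_ne_zero.mpr (hb hm).symm

theorem one_sub_pow_succ_ne_zero {b : RatFunc ℚ} (hb : ∀ {m : ℕ}, m ≠ 0 → b ^ m ≠ 1)
    (m : ℕ) : 1 - b ^ (m + 1) ≠ 0 :=
  one_sub_pow_ne_zero hb m.succ_ne_zero

theorem one_sub_q_pow_sq_ne_zero {k : ℕ} (hk : k ≠ 0) : 1 - (q ^ k) ^ 2 ≠ 0 := by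
  rw [← pow_mul]
  exact one_sub_pow_ne_zero @q_pow_ne_one (by omega)

section GaussianBinomial

variable {b : RatFunc ℚ}

theorem qpoch_self_succ (m : ℕ) :
    qpoch b b (m + 1) = qpoch b b m * (1 - b ^ (m + 1)) := by
  rw [qpoch, Finset.prod_range_succ, ← pow_succ']
  rfl

theorem qpoch_self_ne_zero (hb : ∀ {m : ℕ}, m ≠ 0 → b ^ m ≠ 1) (m : ℕ) :
    qpoch b b m ≠ 0 := by
  induction m with
  | zero => simp [qpoch]
  | succ m ih =>
    rw [qpoch_self_succ]
    exact mul_ne_zero ih (one_sub_pow_succ_ne_zero hb m)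

theorem qbin_succ_succ (hb : ∀ {m : ℕ}, m ≠ 0 → b ^ m ≠ 1) {M N : ℕ} (h : N ≤ M) :
    qbin b (M + 1) (N + 1) = qbin b M N * (1 - b ^ (M + 1)) / (1 - b ^ (N + 1)) := by
  have := qpoch_self_ne_zero hb
  rw [qbin, qbin, if_pos (by omega), if_pos h, Nat.add_sub_add_right, qpoch_self_succ,
    qpoch_self_succ]
  field_simp [one_sub_pow_succ_ne_zero hb]

theorem qbin_succ_left (hb : ∀ {m : ℕ}, m ≠ 0 → b ^ m ≠ 1) {M N : ℕ} (h : N ≤ M) :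
    qbin b (M + 1) N = qbin b M N * (1 - b ^ (M + 1)) / (1 - b ^ (M - N + 1)) := by
  have := qpoch_self_ne_zero hb
  rw [qbin, qbin, if_pos (by omega), if_pos h, Nat.sub_add_comm h, qpoch_self_succ,
    qpoch_self_succ]
  field_simp [one_sub_pow_succ_ne_zero hb]

theorem qbin_central_succ (hb : ∀ {m : ℕ}, m ≠ 0 → b ^ m ≠ 1) (n : ℕ) :
    qbin b (2 * (n + 1) + 1) (n + 1) =
      qbin b (2 * n + 1) n * (1 - b ^ (2 * n + 2)) * (1 - b ^ (2 * n + 3)) /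
        ((1 - b ^ (n + 1)) * (1 - b ^ (n + 2))) := by
  rw [show 2 * (n + 1) + 1 = 2 * n + 1 + 1 + 1 by ring, qbin_succ_left hb (by omega),
    qbin_succ_succ hb (by omega), show 2 * n + 1 + 1 - (n + 1) + 1 = n + 2 by omega,
    div_mul_eq_mul_div, div_div]

end GaussianBinomial

theorem C2_add_one (a : ℤ) : C2 (a + 1) = C2 a + a := by
  have : 2 ∣ a * (a - 1) := (Int.even_mul_pred_self a).two_dvd
  have : (a + 1) * (a + 1 - 1) = a * (a - 1) + 2 * a := by ring
  unfold C2
  omega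

noncomputable def wzScale (n k : ℕ) : RatFunc ℚ :=
  qbin q (2 * n + 1) n * q ^ (-C2 ((n : ℤ) - 2 * k + 1)) * (1 - q) / (2 * qbin (q ^ 2) n k ^ 2)

theorem F2_eq_wzScale_mul (n k : ℕ) :
    F2 n k = wzScale n k *
      ((1 - q * q ^ n) * (q * q ^ n + (q ^ k) ^ 2) / (q * q ^ n * (1 - (q ^ k) ^ 2) ^ 2)) := by
  have hq := q_ne_zero
  unfold F2 wzScale qint
  simp only [zpow_add₀ hq, zpow_sub₀ hq, zpow_mul', zpow_natCast, zpow_ofNat]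
  field_simp

theorem F2_succ_eq_wzScale_mul {n k : ℕ} (hkn : k ≤ n) :
    F2 (n + 1) k = wzScale n k *
      ((q ^ 2 * q ^ n + (q ^ k) ^ 2) * (1 - q ^ 3 * (q ^ n) ^ 2) *
          ((q ^ k) ^ 2 - q ^ 2 * (q ^ n) ^ 2) ^ 2 /
        (q ^ 3 * (q ^ n) ^ 2 * (q ^ k) ^ 2 * (1 - (q ^ k) ^ 2) ^ 2 * (1 - q * q ^ n) *
          (1 - q ^ 2 * (q ^ n) ^ 2))) := by
  have hq := q_ne_zero
  unfold F2 wzScale qint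
  rw [qbin_central_succ @q_pow_ne_one, qbin_succ_left @q_sq_pow_ne_one hkn,
    show q * q ^ n = q ^ (n + 1) by ring, show q ^ 2 * (q ^ n) ^ 2 = q ^ (2 * n + 2) by ring]
  push_cast
  rw [show (n : ℤ) + 1 - 2 * k + 1 = (n - 2 * k + 1) + 1 by ring, C2_add_one, neg_add,
    zpow_add₀ hq]
  simp only [zpow_add₀ hq, zpow_sub₀ hq, zpow_neg, zpow_mul', zpow_natCast, zpow_ofNat, pow_one]
  -- `qbin_succ_left` produced the truncated exponent `n - k + 1`; with `n = k + d` it is `d + 1`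
  -- and `ring` sees `q ^ n = q ^ k * q ^ d`.
  obtain ⟨d, rfl⟩ := Nat.exists_eq_add_of_le hkn
  rw [show k + d - k = d by omega]
  field_simp [one_sub_pow_succ_ne_zero @q_pow_ne_one, one_sub_pow_succ_ne_zero @q_sq_pow_ne_one]
  ring

theorem G2_eq_wzScale_mul {n k : ℕ} (hkn : k ≤ n) :
    G2 n k = wzScale n k *
      -(((q ^ k) ^ 2 - q ^ 5 * (q ^ n) ^ 3) * (1 + q * q ^ n) *
          ((q ^ k) ^ 2 - q ^ 2 * (q ^ n) ^ 2) ^ 2 /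
        (q ^ 3 * (q ^ n) ^ 2 * (q ^ k) ^ 2 * (1 - (q ^ k) ^ 2) ^ 2 *
          (1 - q ^ 2 * (q ^ n) ^ 2) ^ 2)) := by
  have hq := q_ne_zero
  unfold G2 wzScale qint
  rw [qbin_succ_left @q_sq_pow_ne_one hkn, show q ^ 2 * (q ^ n) ^ 2 = q ^ (2 * n + 2) by ring,
    show (n : ℤ) - 2 * k + 3 = (n - 2 * k + 1) + 1 + 1 by ring, C2_add_one, C2_add_one, neg_add,
    neg_add, zpow_add₀ hq, zpow_add₀ hq]
  simp only [zpow_add₀ hq, zpow_sub₀ hq, zpow_neg, zpow_mul', zpow_natCast, zpow_ofNat, pow_one]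
  obtain ⟨d, rfl⟩ := Nat.exists_eq_add_of_le hkn
  rw [show k + d - k = d by omega]
  field_simp [one_sub_pow_succ_ne_zero @q_pow_ne_one, one_sub_pow_succ_ne_zero @q_sq_pow_ne_one]
  ring

theorem G2_succ_eq_wzScale_mul {n k : ℕ} (hkn : k ≤ n) :
    G2 n (k + 1) = wzScale n k *
      -(((q ^ k) ^ 2 - q ^ 3 * (q ^ n) ^ 3) * (1 + q * q ^ n) /
        ((q ^ k) ^ 2 * (1 - q ^ 2 * (q ^ n) ^ 2) ^ 2)) := by
  have hq := q_ne_zero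
  unfold G2 wzScale qint
  rw [qbin_succ_succ @q_sq_pow_ne_one hkn, show q ^ 2 * (q ^ n) ^ 2 = q ^ (2 * n + 2) by ring]
  push_cast
  rw [show (n : ℤ) - 2 * (k + 1) + 3 = n - 2 * k + 1 by ring,
    show (2 : ℤ) * (k + 1) = (2 * k + 2 : ℕ) by push_cast; ring]
  simp only [zpow_add₀ hq, zpow_sub₀ hq, zpow_neg, zpow_mul', zpow_natCast, zpow_ofNat, pow_one]
  field_simp [one_sub_pow_succ_ne_zero @q_pow_ne_one, one_sub_pow_succ_ne_zero @q_sq_pow_ne_one]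
  ring

theorem q_staver_wz_general (n k : ℕ) (hk : 1 ≤ k) (hkn : k ≤ n) :
    F2 (n + 1) k - F2 n k = G2 n (k + 1) - G2 n k := by
  rw [F2_succ_eq_wzScale_mul hkn, F2_eq_wzScale_mul, G2_succ_eq_wzScale_mul hkn,
    G2_eq_wzScale_mul hkn, ← mul_sub, ← mul_sub]
  congr 1
  have hq := q_ne_zero
  exact staver_rational_identity hq (pow_ne_zero k hq) (pow_ne_zero n hq)
    (by rw [← pow_succ']; exact one_sub_pow_succ_ne_zero @q_pow_ne_one n)
    (one_sub_q_pow_sq_ne_zero (by omega))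
    (by rw [← pow_mul, ← pow_add]; exact one_sub_pow_ne_zero @q_pow_ne_one (by omega))

theorem q_staver_wz (n k : ℕ) (hn : 0 < n) (hk : 1 ≤ k) (hkn : k ≤ n) :
    F2 (n + 1) k - F2 n k = G2 n (k + 1) - G2 n k :=
  q_staver_wz_general n k hk hkn
end

section
/- Let n be a positive odd integer. Then for each k with 1 ≤ k ≤ (n-1)/2, the rational function [n] · binom_q(2n-2k, n-1) · (q;q^2)_n (q;q^2)_{n-k} / ((q;q)_n (q^2;q^2)_{n-k}) is congruent to 0 modulo [n]·Φ_n(q)^2. -/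
open Polynomial Finset

/-!
Each factor `1 - q^m` is, up to sign, the product of the cyclotomic polynomials `Φ_d` over
`d ∣ m`, so the rational function is a ratio of products of cyclotomic polynomials, and the
exponent of `Φ_d` in `(q^a; q^b)_m` counts the `j < m` with `d ∣ a + b j`. For odd `d` this is
`⌊m/d⌋` for `(q;q)_m` and `(q²;q²)_m`, and `⌊2m/d⌋ - ⌊m/d⌋` for `(q;q²)_m`. The congruence
holds as soon as, for every divisor `d > 1` of `n`, the exponent of `Φ_d` in the numerator
exceeds the one in the denominator by its exponent in `[n] Φ_n²` (`1`, or `3` for `d = n`).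
For `d < n` this follows from `⌊a/d⌋ + ⌊b/d⌋ ≤ ⌊(a+b)/d⌋`; for `d = n` all counts are explicit.
-/

noncomputable def cycloProd (N : ℕ) (e : ℕ → ℕ) : ℚ[X] :=
  ∏ d ∈ Icc 1 N, cyclotomic d ℚ ^ e d

section cycloProd

theorem cycloProd_ne_zero (N : ℕ) (e : ℕ → ℕ) : cycloProd N e ≠ 0 :=
  prod_ne_zero_iff.mpr fun d _ => pow_ne_zero _ (cyclotomic_ne_zero d ℚ)

variable {N : ℕ}

theorem cycloProd_congr {e f : ℕ → ℕ} (h : ∀ d ∈ Icc 1 N, e d = f d) :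
    cycloProd N e = cycloProd N f :=
  prod_congr rfl fun d hd => by rw [h d hd]

theorem cycloProd_add (e f : ℕ → ℕ) : cycloProd N (e + f) = cycloProd N e * cycloProd N f := by
  simp only [cycloProd, Pi.add_apply, pow_add, prod_mul_distrib]

theorem cycloProd_sum {ι : Type*} (s : Finset ι) (e : ι → ℕ → ℕ) :
    cycloProd N (fun d => ∑ j ∈ s, e j d) = ∏ j ∈ s, cycloProd N (e j) := by
  simp only [cycloProd, ← prod_pow_eq_pow_sum]
  exact prod_comm

theorem cycloProd_ite_eq_prod_filter (p : ℕ → Prop) [DecidablePred p] :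
    cycloProd N (fun d => if p d then 1 else 0) = ∏ d ∈ Icc 1 N with p d, cyclotomic d ℚ := by
  simp only [cycloProd, pow_ite, pow_one, pow_zero, prod_ite, prod_const_one, mul_one]

theorem isCoprime_cycloProd {e f : ℕ → ℕ} (h : ∀ d ∈ Icc 1 N, e d ≠ 0 → f d = 0) :
    IsCoprime (cycloProd N e) (cycloProd N f) := by
  refine IsCoprime.prod_left fun d hd => IsCoprime.prod_right fun d' hd' => ?_
  by_cases hdd' : d = d'
  · subst hdd'
    by_cases he : e d = 0
    · simp [he, isCoprime_one_left]
    · simp [h d hd he, isCoprime_one_right]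
  · exact (cyclotomic.isCoprime_rat hdd').pow

end cycloProd

theorem congrMod_zero_of_mul_eq {x : RatFunc ℚ} {a b P : ℚ[X]} (hb : b ≠ 0)
    (hx : x * algebraMap ℚ[X] (RatFunc ℚ) b = algebraMap ℚ[X] (RatFunc ℚ) a)
    (ha : P ∣ a) (hbP : IsCoprime b P) : congrMod x 0 P := by
  have hx' : x = algebraMap ℚ[X] (RatFunc ℚ) a / algebraMap ℚ[X] (RatFunc ℚ) b := by
    rw [← hx, mul_div_cancel_right₀ _ (RatFunc.algebraMap_ne_zero hb)]
  rw [congrMod, sub_zero]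
  constructor
  · have hcross := (RatFunc.num_mul_eq_mul_denom_iff hb).mpr hx'
    exact hbP.symm.dvd_of_dvd_mul_right (hcross ▸ dvd_mul_of_dvd_left ha _)
  · exact hbP.of_isCoprime_of_dvd_left ((RatFunc.denom_dvd hb).mpr ⟨a, hx'⟩)

theorem congrMod_zero_of_associated_cycloProd {x : RatFunc ℚ} {A C : ℚ[X]} {N : ℕ}
    {a c r : ℕ → ℕ}
    (hx : x * algebraMap ℚ[X] (RatFunc ℚ) C = algebraMap ℚ[X] (RatFunc ℚ) A)
    (hA : Associated (cycloProd N a) A) (hC : Associated (cycloProd N c) C)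
    (hr : ∀ d ∈ Icc 1 N, r d ≠ 0 → c d + r d ≤ a d) :
    congrMod x 0 (cycloProd N r) := by
  obtain ⟨u, rfl⟩ := hA
  obtain ⟨v, rfl⟩ := hC
  set alg := algebraMap ℚ[X] (RatFunc ℚ)
  set B := cycloProd N fun d => c d + r d - a d
  set A' := cycloProd N fun d => a d - (c d + r d)
  -- exponentwise both sides are `Φ_d ^ max (a d) (c d + r d)`
  have hsplit : cycloProd N a * B = cycloProd N c * (cycloProd N r * A') := by
    simp only [B, A', ← cycloProd_add]
    exact cycloProd_congr fun d _ => by simp only [Pi.add_apply]; omega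
  have hcancel : x * alg (B * v) = alg (cycloProd N r * A' * u) := by
    refine mul_left_cancel₀ (RatFunc.algebraMap_ne_zero (cycloProd_ne_zero N c)) ?_
    calc alg (cycloProd N c) * (x * alg (B * v))
        = x * alg (cycloProd N c * v) * alg B := by simp only [map_mul]; ring
      _ = alg (cycloProd N c * (cycloProd N r * A') * u) := by
        rw [hx, ← map_mul, mul_right_comm, hsplit]
      _ = alg (cycloProd N c) * alg (cycloProd N r * A' * u) := by simp only [map_mul]; ring
  refine congrMod_zero_of_mul_eq (mul_ne_zero (cycloProd_ne_zero N _) v.ne_zero) hcancel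
    (dvd_mul_of_dvd_left (dvd_mul_right _ _) _) ?_
  refine (isCoprime_mul_unit_right_left v.isUnit _ _).mpr (isCoprime_cycloProd fun d hd hB => ?_)
  have := hr d hd
  omega

theorem associated_cycloProd_one_sub_X_pow {m N : ℕ} (hm : 0 < m) (hmN : m ≤ N) :
    Associated (cycloProd N fun d => if d ∣ m then 1 else 0) (1 - X ^ m : ℚ[X]) := by
  have hdiv : {d ∈ Icc 1 N | d ∣ m} = m.divisors := by
    ext d
    simp only [mem_filter, mem_Icc, Nat.mem_divisors]
    constructor
    · rintro ⟨-, hd⟩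
      exact ⟨hd, hm.ne'⟩
    · rintro ⟨hd, -⟩
      exact ⟨⟨Nat.pos_of_dvd_of_pos hd hm, (Nat.le_of_dvd hm hd).trans hmN⟩, hd⟩
  rw [cycloProd_ite_eq_prod_filter, hdiv, prod_cyclotomic_eq_X_pow_sub_one hm, ← neg_sub]
  exact (Associated.refl _).neg_left

noncomputable def pochPoly (a b m : ℕ) : ℚ[X] :=
  ∏ j ∈ range m, (1 - X ^ (a + b * j))

def pochExp (a b m d : ℕ) : ℕ :=
  #{j ∈ range m | d ∣ a + b * j}

theorem qpoch_pow_pow (a b m : ℕ) :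
    qpoch (q ^ a) (q ^ b) m = algebraMap ℚ[X] (RatFunc ℚ) (pochPoly a b m) := by
  simp only [qpoch, pochPoly, q, map_prod, map_sub, map_one, map_mul, map_pow,
    RatFunc.algebraMap_X, pow_add, pow_mul]

theorem one_sub_X_pow_ne_zero {m : ℕ} (hm : m ≠ 0) : (1 - X ^ m : ℚ[X]) ≠ 0 :=
  fun h => by simpa [hm] using congrArg (eval 0) h

theorem pochPoly_ne_zero {a : ℕ} (ha : 0 < a) (b m : ℕ) : pochPoly a b m ≠ 0 :=
  prod_ne_zero_iff.mpr fun _ _ => one_sub_X_pow_ne_zero (by omega)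

theorem associated_cycloProd_pochPoly {a b m N : ℕ} (ha : 0 < a)
    (hN : ∀ j < m, a + b * j ≤ N) :
    Associated (cycloProd N (pochExp a b m)) (pochPoly a b m) := by
  have hexp : pochExp a b m = fun d => ∑ j ∈ range m, if d ∣ a + b * j then 1 else 0 := by
    funext d
    rw [pochExp, card_filter]
  rw [hexp, cycloProd_sum]
  exact Associated.prod _ _ _ fun j hj =>
    associated_cycloProd_one_sub_X_pow (by omega) (hN j (mem_range.mp hj))

theorem pochExp_one_one (m d : ℕ) : pochExp 1 1 m d = m / d := by
  rw [← Nat.card_multiples, pochExp]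
  simp only [one_mul, add_comm 1]

theorem pochExp_two_two {d : ℕ} (hd : Odd d) (m : ℕ) : pochExp 2 2 m d = m / d := by
  rw [← pochExp_one_one, pochExp, pochExp]
  refine congrArg card (filter_congr fun j _ => ?_)
  rw [show 2 + 2 * j = 2 * (1 + 1 * j) by ring]
  exact hd.coprime_two_right.dvd_mul_left

theorem pochExp_one_one_two_mul (m d : ℕ) :
    pochExp 1 1 (2 * m) d = pochExp 1 2 m d + pochExp 2 2 m d := by
  simp only [pochExp, card_filter]
  induction m with
  | zero => simp
  | succ m ih =>
    rw [show 2 * (m + 1) = 2 * m + 1 + 1 by ring, sum_range_succ, sum_range_succ, ih,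
      sum_range_succ, sum_range_succ]
    simp only [one_mul, show 1 + (2 * m + 1) = 2 + 2 * m by ring]
    ring

theorem pochExp_one_two {d : ℕ} (hd : Odd d) (m : ℕ) :
    pochExp 1 2 m d = 2 * m / d - m / d := by
  have := pochExp_one_one_two_mul m d
  rw [pochExp_one_one, pochExp_two_two hd] at this
  omega

noncomputable def numPoly (n k : ℕ) : ℚ[X] :=
  (1 - X ^ n) * pochPoly 1 1 (2 * n - 2 * k) * (pochPoly 1 2 n * pochPoly 1 2 (n - k))

noncomputable def denPoly (n k : ℕ) : ℚ[X] :=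
  (1 - X ^ 1) * (pochPoly 1 1 (n - 1) * pochPoly 1 1 (2 * n - 2 * k - (n - 1))) *
    (pochPoly 1 1 n * pochPoly 2 2 (n - k))

def numExp (n k : ℕ) : ℕ → ℕ :=
  (fun d => if d ∣ n then 1 else 0) + pochExp 1 1 (2 * n - 2 * k) +
    (pochExp 1 2 n + pochExp 1 2 (n - k))

def denExp (n k : ℕ) : ℕ → ℕ :=
  (fun d => if d ∣ 1 then 1 else 0) +
    (pochExp 1 1 (n - 1) + pochExp 1 1 (2 * n - 2 * k - (n - 1))) +
    (pochExp 1 1 n + pochExp 2 2 (n - k))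

def modExp (n : ℕ) : ℕ → ℕ :=
  (fun d => if d ∣ n ∧ d ≠ 1 then 1 else 0) + fun d => if d = n then 2 else 0

theorem mul_denPoly_eq_numPoly {n k : ℕ} (hk : 2 * k < n) :
    qint (n : ℤ) * qbin q (2 * n - 2 * k) (n - 1) *
        (qpoch q (q ^ 2) n * qpoch q (q ^ 2) (n - k)) /
        (qpoch q q n * qpoch (q ^ 2) (q ^ 2) (n - k)) *
      algebraMap ℚ[X] (RatFunc ℚ) (denPoly n k) =
    algebraMap ℚ[X] (RatFunc ℚ) (numPoly n k) := by
  have h11 (m : ℕ) : qpoch q q m = algebraMap ℚ[X] (RatFunc ℚ) (pochPoly 1 1 m) := by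
    simpa only [pow_one] using qpoch_pow_pow 1 1 m
  have h12 (m : ℕ) : qpoch q (q ^ 2) m = algebraMap ℚ[X] (RatFunc ℚ) (pochPoly 1 2 m) := by
    simpa only [pow_one] using qpoch_pow_pow 1 2 m
  have hqint : qint (n : ℤ) = algebraMap ℚ[X] (RatFunc ℚ) (1 - X ^ n) /
      algebraMap ℚ[X] (RatFunc ℚ) (1 - X ^ 1) := by
    simp only [qint, q, zpow_natCast, map_sub, map_one, map_pow, RatFunc.algebraMap_X, pow_one]
  have hne (a b m : ℕ) (ha : 0 < a) : algebraMap ℚ[X] (RatFunc ℚ) (pochPoly a b m) ≠ 0 :=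
    RatFunc.algebraMap_ne_zero (pochPoly_ne_zero ha b m)
  have hX : algebraMap ℚ[X] (RatFunc ℚ) (1 - X ^ 1) ≠ 0 :=
    RatFunc.algebraMap_ne_zero (one_sub_X_pow_ne_zero one_ne_zero)
  rw [qbin, if_pos (by omega), hqint, h11, h11, h11, h11, h12, h12, qpoch_pow_pow, numPoly,
    denPoly]
  simp only [map_mul]
  field_simp [hne 1 1, hne 2 2]

theorem associated_cycloProd_numPoly {n : ℕ} (hn : 0 < n) (k : ℕ) :
    Associated (cycloProd (2 * n) (numExp n k)) (numPoly n k) := by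
  simp only [numExp, numPoly, cycloProd_add]
  refine ((associated_cycloProd_one_sub_X_pow hn (by omega)).mul_mul ?_).mul_mul
    (Associated.mul_mul ?_ ?_) <;>
  exact associated_cycloProd_pochPoly one_pos fun j hj => by omega

theorem associated_cycloProd_denPoly {n : ℕ} (hn : 0 < n) (k : ℕ) :
    Associated (cycloProd (2 * n) (denExp n k)) (denPoly n k) := by
  simp only [denExp, denPoly, cycloProd_add]
  refine ((associated_cycloProd_one_sub_X_pow one_pos (by omega)).mul_mul
    (Associated.mul_mul ?_ ?_)).mul_mul (Associated.mul_mul ?_ ?_) <;>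
  exact associated_cycloProd_pochPoly (by norm_num) fun j hj => by omega

theorem qnPoly_mul_cyclotomic_sq {n N : ℕ} (hn : 0 < n) (hnN : n ≤ N) :
    qnPoly n * cyclotomic n ℚ ^ 2 = cycloProd N (modExp n) := by
  have hdiv : {d ∈ Icc 1 N | d ∣ n ∧ d ≠ 1} = n.divisors.erase 1 := by
    ext d
    simp only [mem_filter, mem_Icc, mem_erase, Nat.mem_divisors]
    constructor
    · rintro ⟨-, hd, hd1⟩
      exact ⟨hd1, hd, hn.ne'⟩
    · rintro ⟨hd1, hd, -⟩
      exact ⟨⟨Nat.pos_of_dvd_of_pos hd hn, (Nat.le_of_dvd hn hd).trans hnN⟩, hd, hd1⟩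
  rw [modExp, cycloProd_add, cycloProd_ite_eq_prod_filter, hdiv, prod_cyclotomic_eq_geom_sum hn,
    qnPoly]
  simp only [cycloProd, pow_ite, pow_zero, prod_ite_eq', mem_Icc]
  rw [if_pos ⟨hn, hnN⟩]

theorem denExp_add_modExp_le_numExp {n k d : ℕ} (hn : Odd n) (hk : 1 ≤ k) (hkn : 2 * k < n)
    (hd : modExp n d ≠ 0) : denExp n k d + modExp n d ≤ numExp n k d := by
  have hdn : d ∣ n ∧ d ≠ 1 := by
    by_cases hd_eq : d = n
    · exact ⟨hd_eq ▸ dvd_rfl, by omega⟩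
    · simpa [modExp, hd_eq] using hd
  have hd_odd : Odd d := hn.of_dvd_nat hdn.1
  have hd_one : ¬d ∣ 1 := by rw [Nat.dvd_one]; exact hdn.2
  simp only [numExp, denExp, modExp, Pi.add_apply, pochExp_one_one, pochExp_one_two hd_odd,
    pochExp_two_two hd_odd, if_pos hdn.1, if_neg hd_one, if_pos hdn,
    show 2 * (n - k) = 2 * n - 2 * k by omega]
  have hsplit₁ : (n - 1) / d + (2 * n - 2 * k - (n - 1)) / d ≤ (2 * n - 2 * k) / d :=
    Nat.div_add_div_le_add_div.trans_eq (by congr 1; omega)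
  have hsplit₂ : (n - k) / d + (n - k) / d ≤ (2 * n - 2 * k) / d :=
    Nat.div_add_div_le_add_div.trans_eq (by congr 1; omega)
  have hsplit₃ : n / d + n / d ≤ 2 * n / d :=
    Nat.div_add_div_le_add_div.trans_eq (by rw [two_mul])
  split_ifs with hd_eq
  · subst hd_eq
    have hd_pos : 0 < d := by omega
    have : (d - 1) / d = 0 := Nat.div_eq_of_lt (by omega)
    have : (2 * d - 2 * k - (d - 1)) / d = 0 := Nat.div_eq_of_lt (by omega)
    have : (d - k) / d = 0 := Nat.div_eq_of_lt (by omega)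
    have : d / d = 1 := Nat.div_self hd_pos
    have : 1 ≤ (2 * d - 2 * k) / d := (Nat.le_div_iff_mul_le hd_pos).mpr (by omega)
    omega
  · omega

theorem q_big_qbino (n : ℕ) (hn : 0 < n) (hodd : Odd n) (k : ℕ) (hk1 : 1 ≤ k)
    (hk2 : k ≤ (n - 1) / 2) :
    congrMod
      (qint (n : ℤ) * qbin q (2 * n - 2 * k) (n - 1) *
        (qpoch q (q ^ 2) n * qpoch q (q ^ 2) (n - k)) /
        (qpoch q q n * qpoch (q ^ 2) (q ^ 2) (n - k)))
      0 (qnPoly n * Polynomial.cyclotomic n ℚ ^ 2) := by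
  have hkn : 2 * k < n := by omega
  rw [qnPoly_mul_cyclotomic_sq hn (by omega : n ≤ 2 * n)]
  exact congrMod_zero_of_associated_cycloProd (mul_denPoly_eq_numPoly hkn)
    (associated_cycloProd_numPoly hn k) (associated_cycloProd_denPoly hn k)
    fun _ _ hd => denExp_add_modExp_le_numExp hodd hk1 hkn hd
end

section
/- Let n be an odd positive integer, n ≥ 3, and let ζ be a primitive n-th root of unity in ℂ. Then ∑_{k=1}^{n-1} ζ^k / (1 - ζ^{2k})^2 = (n^2 - 1)/24. -/
/-! For an `n`-th root of unity `w ≠ ±1` partial fractions give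
`4w / (1 - w²)² = 1 / (1 - w)² - 1 / (1 + w)²`, and both reciprocals are polynomials in `w`:
`1 / (1 - w) = -(1/n) ∑ j wʲ` and, for odd `n`, `1 / (1 + w) = (1/2) ∑ (-1)ʲ wʲ`.
Summing the squares of these polynomials over all powers `w = ζᵏ`, orthogonality of the
characters `k ↦ ζ^(mk)` keeps only the coefficient pairs `(i, j)` with `i + j ≡ 0 [MOD n]`,
which leaves the elementary sums `∑ i (n - i)` and `∑ (-1)ⁱ (-1)ⁿ⁻ⁱ`. -/

open Polynomial Finset

section CommRing

variable {R : Type*} [CommRing R]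

theorem one_sub_mul_sum_range_mul_pow (w : R) (n : ℕ) :
    (1 - w) * ∑ j ∈ range n, (j : R) * w ^ j = w * ∑ j ∈ range n, w ^ j - n * w ^ n := by
  induction n with
  | zero => simp
  | succ n ih =>
    rw [sum_range_succ, sum_range_succ, mul_add, ih]
    push_cast
    ring

theorem one_add_mul_sum_range_neg_one_pow_mul_pow {n : ℕ} (hn : Odd n) {w : R}
    (hw : w ^ n = 1) : (1 + w) * ∑ j ∈ range n, (-1 : R) ^ j * w ^ j = 2 := by
  have h := mul_neg_geom_sum (-w) n
  simp only [← neg_pow, hn.neg_pow, hw] at h ⊢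
  linear_combination h

theorem two_mul_sum_range_natCast (n : ℕ) : 2 * ∑ i ∈ range n, (i : R) = n * (n - 1) := by
  induction n with
  | zero => simp
  | succ n ih => rw [sum_range_succ, mul_add, ih]; push_cast; ring

theorem six_mul_sum_range_mul_sub (n : ℕ) :
    6 * ∑ i ∈ range n, (i : R) * (n - i) = n ^ 3 - n := by
  induction n with
  | zero => simp
  | succ n ih =>
    have hsplit : ∑ i ∈ range n, (i : R) * (↑(n + 1) - i)
        = ∑ i ∈ range n, (i : R) * (n - i) + ∑ i ∈ range n, (i : R) := by
      rw [← sum_add_distrib]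
      refine sum_congr rfl fun i _ => ?_
      push_cast
      ring
    rw [sum_range_succ, mul_add, hsplit, mul_add, ih]
    push_cast
    linear_combination 3 * two_mul_sum_range_natCast (R := R) n

theorem six_mul_sum_range_mul_sub_mod (n : ℕ) :
    6 * ∑ i ∈ range n, (i : R) * ((n - i) % n : ℕ) = n ^ 3 - n := by
  rw [← six_mul_sum_range_mul_sub]
  congr 1
  refine sum_congr rfl fun i hi => ?_
  rw [mem_range] at hi
  rcases Nat.eq_zero_or_pos i with rfl | hi0
  · simp
  · rw [Nat.mod_eq_of_lt (by omega), Nat.cast_sub hi.le]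

theorem sum_range_neg_one_pow_mul_neg_one_pow_mod_sub {n : ℕ} (hn : Odd n) :
    ∑ i ∈ range n, (-1 : R) ^ i * (-1) ^ ((n - i) % n) = 2 - n := by
  have hpos : 0 < n := hn.pos
  have hterm : ∀ i ∈ Ico 1 n, (-1 : R) ^ i * (-1) ^ ((n - i) % n) = -1 := by
    intro i hi
    rw [mem_Ico] at hi
    rw [Nat.mod_eq_of_lt (by omega), ← pow_add, Nat.add_sub_cancel' hi.2.le, hn.neg_one_pow]
  rw [sum_range_eq_add_Ico _ hpos, sum_congr rfl hterm, sum_const, Nat.card_Ico, nsmul_eq_mul,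
    Nat.cast_sub hpos, Nat.sub_zero, Nat.mod_self]
  push_cast
  ring

end CommRing

theorem Nat.dvd_add_iff_sub_mod_eq {n i j : ℕ} (hi : i < n) (hj : j < n) :
    n ∣ i + j ↔ (n - i) % n = j := by
  constructor
  · rintro ⟨c, hc⟩
    have hc2 : c < 2 := by nlinarith
    interval_cases c
    · obtain rfl : i = 0 := by omega
      rw [Nat.sub_zero, Nat.mod_self]
      omega
    · rw [Nat.mod_eq_of_lt (by omega)]
      omega
  · rintro rfl
    rcases Nat.eq_zero_or_pos i with rfl | hi0
    · simp
    · rw [Nat.mod_eq_of_lt (by omega), Nat.add_sub_cancel' hi.le]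

section Domain

variable {R : Type*} [CommRing R] [IsDomain R]

theorem geom_sum_eq_zero_of_pow_eq_one {w : R} {n : ℕ} (hw : w ^ n = 1) (hw1 : w ≠ 1) :
    ∑ j ∈ range n, w ^ j = 0 := by
  have h := mul_neg_geom_sum w n
  rw [hw, sub_self] at h
  exact (mul_eq_zero.mp h).resolve_left (sub_ne_zero.mpr hw1.symm)

theorem one_sub_mul_sum_range_mul_pow_of_pow_eq_one {w : R} {n : ℕ} (hw : w ^ n = 1)
    (hw1 : w ≠ 1) : (1 - w) * ∑ j ∈ range n, (j : R) * w ^ j = -n := by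
  rw [one_sub_mul_sum_range_mul_pow, geom_sum_eq_zero_of_pow_eq_one hw hw1, hw]
  ring

variable {ζ : R} {n : ℕ}

theorem IsPrimitiveRoot.sum_range_pow_pow (hζ : IsPrimitiveRoot ζ n) (m : ℕ) :
    ∑ k ∈ range n, (ζ ^ m) ^ k = if n ∣ m then (n : R) else 0 := by
  split_ifs with h
  · simp [(hζ.pow_eq_one_iff_dvd m).mpr h]
  · refine geom_sum_eq_zero_of_pow_eq_one ?_ fun h1 => h ((hζ.pow_eq_one_iff_dvd m).mp h1)
    rw [pow_right_comm, hζ.pow_eq_one, one_pow]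

theorem IsPrimitiveRoot.sum_range_sq_sum_range_mul_pow (hζ : IsPrimitiveRoot ζ n)
    (f : ℕ → R) :
    ∑ k ∈ range n, (∑ j ∈ range n, f j * (ζ ^ k) ^ j) ^ 2
      = n * ∑ i ∈ range n, f i * f ((n - i) % n) := by
  calc ∑ k ∈ range n, (∑ j ∈ range n, f j * (ζ ^ k) ^ j) ^ 2
      = ∑ i ∈ range n, ∑ j ∈ range n, f i * f j * ∑ k ∈ range n, (ζ ^ (i + j)) ^ k := by
        simp_rw [sq, sum_mul_sum, mul_sum]
        rw [sum_comm]
        refine sum_congr rfl fun i _ => ?_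
        rw [sum_comm]
        refine sum_congr rfl fun j _ => sum_congr rfl fun k _ => ?_
        ring
    _ = ∑ i ∈ range n, ∑ j ∈ range n, if (n - i) % n = j then n * (f i * f j) else 0 := by
        refine sum_congr rfl fun i hi => sum_congr rfl fun j hj => ?_
        have hiff := Nat.dvd_add_iff_sub_mod_eq (mem_range.mp hi) (mem_range.mp hj)
        rw [hζ.sum_range_pow_pow]
        by_cases h : n ∣ i + j
        · rw [if_pos h, if_pos (hiff.mp h)]
          ring
        · rw [if_neg h, if_neg (mt hiff.mpr h), mul_zero]
    _ = n * ∑ i ∈ range n, f i * f ((n - i) % n) := by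
        rw [mul_sum]
        refine sum_congr rfl fun i hi => ?_
        have hn : 0 < n := Nat.zero_lt_of_lt (mem_range.mp hi)
        rw [sum_ite_eq, if_pos (mem_range.mpr (Nat.mod_lt _ hn))]

theorem IsPrimitiveRoot.twelve_mul_sum_Ico_sq_sum_range_natCast_mul_pow
    (hζ : IsPrimitiveRoot ζ n) (hn : 0 < n) :
    12 * ∑ k ∈ Ico 1 n, (∑ j ∈ range n, (j : R) * (ζ ^ k) ^ j) ^ 2
      = n ^ 2 * (n - 1) * (5 - n) := by
  have hparseval := hζ.sum_range_sq_sum_range_mul_pow (fun j => (j : R))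
  rw [sum_range_eq_add_Ico _ hn] at hparseval
  simp only [pow_zero, one_pow, mul_one] at hparseval
  have hconv := six_mul_sum_range_mul_sub_mod (R := R) n
  have hgauss := two_mul_sum_range_natCast (R := R) n
  linear_combination 12 * hparseval + 2 * (n : R) * hconv
    - 3 * (2 * ∑ j ∈ range n, (j : R) + n * (n - 1)) * hgauss

theorem IsPrimitiveRoot.sum_Ico_sq_sum_range_neg_one_pow_mul_pow
    (hζ : IsPrimitiveRoot ζ n) (hn : Odd n) :
    ∑ k ∈ Ico 1 n, (∑ j ∈ range n, (-1 : R) ^ j * (ζ ^ k) ^ j) ^ 2 = -(n - 1) ^ 2 := by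
  have hparseval := hζ.sum_range_sq_sum_range_mul_pow (fun j => (-1 : R) ^ j)
  rw [sum_range_eq_add_Ico _ hn.pos, sum_range_neg_one_pow_mul_neg_one_pow_mod_sub hn]
    at hparseval
  simp only [pow_zero, one_pow, mul_one, neg_one_geom_sum, Nat.not_even_iff_odd.mpr hn,
    if_false] at hparseval
  linear_combination hparseval

end Domain

theorem div_one_sub_sq_sq_eq_of_pow_eq_one {K : Type*} [Field K] [CharZero K] {n : ℕ}
    (hn : Odd n) {w : K} (hw : w ^ n = 1) (hw2 : w ^ 2 ≠ 1) :
    w / (1 - w ^ 2) ^ 2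
      = (∑ j ∈ range n, (j : K) * w ^ j) ^ 2 / (4 * n ^ 2)
        - (∑ j ∈ range n, (-1 : K) ^ j * w ^ j) ^ 2 / 16 := by
  have hw1 : 1 - w ≠ 0 := sub_ne_zero.mpr fun h => hw2 (by simp [← h])
  have hw1' : 1 + w ≠ 0 := fun h => hw2 (by rw [eq_neg_of_add_eq_zero_right h]; simp)
  have hn0 : (n : K) ≠ 0 := Nat.cast_ne_zero.mpr hn.pos.ne'
  have hA : ∑ j ∈ range n, (j : K) * w ^ j = -n / (1 - w) := by
    rw [eq_div_iff hw1, mul_comm]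
    exact one_sub_mul_sum_range_mul_pow_of_pow_eq_one hw fun h => hw2 (by simp [h])
  have hB : ∑ j ∈ range n, (-1 : K) ^ j * w ^ j = 2 / (1 + w) := by
    rw [eq_div_iff hw1', mul_comm]
    exact one_add_mul_sum_range_neg_one_pow_mul_pow hn hw
  rw [hA, hB]
  field_simp
  ring

theorem primitive_root_sum_general (n : ℕ) (hodd : Odd n) (ζ : ℂ)
    (hζ : IsPrimitiveRoot ζ n) :
    ∑ k ∈ Finset.Icc 1 (n - 1), ζ ^ k / (1 - ζ ^ (2 * k)) ^ 2 = ((n : ℂ) ^ 2 - 1) / 24 := by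
  have hn : 0 < n := hodd.pos
  have hterm : ∀ k ∈ Ico 1 n, ζ ^ k / (1 - ζ ^ (2 * k)) ^ 2
      = (∑ j ∈ range n, (j : ℂ) * (ζ ^ k) ^ j) ^ 2 / (4 * n ^ 2)
        - (∑ j ∈ range n, (-1 : ℂ) ^ j * (ζ ^ k) ^ j) ^ 2 / 16 := by
    intro k hk
    rw [mem_Ico] at hk
    rw [pow_mul']
    refine div_one_sub_sq_sq_eq_of_pow_eq_one hodd ?_ ?_
    · rw [pow_right_comm, hζ.pow_eq_one, one_pow]
    · rw [← pow_mul, Ne, hζ.pow_eq_one_iff_dvd]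
      exact fun h => Nat.not_dvd_of_pos_of_lt hk.1 hk.2
        (hodd.coprime_two_right.dvd_of_dvd_mul_right h)
  have hIcc : Icc 1 (n - 1) = Ico 1 n := by
    ext
    simp only [mem_Icc, mem_Ico]
    omega
  have hA : ∑ k ∈ Ico 1 n, (∑ j ∈ range n, (j : ℂ) * (ζ ^ k) ^ j) ^ 2
      = n ^ 2 * (n - 1) * (5 - n) / 12 :=
    eq_div_of_mul_eq (by norm_num) ((mul_comm _ _).trans
      (hζ.twelve_mul_sum_Ico_sq_sum_range_natCast_mul_pow hn))
  have hB := hζ.sum_Ico_sq_sum_range_neg_one_pow_mul_pow hodd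
  have hn0 : (n : ℂ) ≠ 0 := Nat.cast_ne_zero.mpr hn.ne'
  rw [hIcc, sum_congr rfl hterm, sum_sub_distrib, ← sum_div, ← sum_div, hA, hB]
  field_simp
  ring

theorem primitive_root_sum (n : ℕ) (hodd : Odd n) (h3 : 3 ≤ n) (ζ : ℂ)
    (hζ : IsPrimitiveRoot ζ n) :
    ∑ k ∈ Finset.Icc 1 (n - 1), ζ ^ k / (1 - ζ ^ (2 * k)) ^ 2 = ((n : ℂ) ^ 2 - 1) / 24 :=
  primitive_root_sum_general n hodd ζ hζ
end

section
/- (Staver's identity) For every positive integer N, ∑_{k=1}^{N} binom(2k,k)/k = ((N+1)/3) · binom(2N+1,N) · ∑_{k=1}^{N} 1/(k^2 · binom(N,k)^2), as an identity of rational numbers. -/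
/-!
Write `T(n) = ∑_{k=1}^n 1/(k² C(n,k)²)` and `c(n) = C(2n,n)`, so that `C(2N+1,N) = c(N+1)/2` and the
right-hand side is `(N+1) c(N+1) T(N) / 6`. Since `(n+1) c(n+1) = 2(2n+1) c(n)`, induction on `N`
reduces the identity to the recurrence `2(2n+3) T(n+1) = (n+1) T(n) + 6/(n+1)`. That recurrence
telescopes: termwise, `2(2n+3)/(k² C(n+1,k)²) − (n+1)/(k² C(n,k)²) = G(k) − G(k−1)` for the
Gosper certificate `G(k) = (2k−3n−3)/((n+1)² C(n,k)²)`, and `G(n) − G(0) + 2(2n+3)/(n+1)² = 6/(n+1)`.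
-/

open Polynomial Finset

section CastChoose

variable {K : Type*} [Field K] [CharZero K]

lemma cast_succ_choose_succ_eq_div {n i : ℕ} (h : i < n) :
    ((n + 1).choose (i + 1) : K) = n.choose (i + 1) * (n + 1) / (n - i) := by
  rw [eq_div_iff (sub_ne_zero.mpr (Nat.cast_injective.ne h.ne'))]
  have := Nat.choose_mul_succ_eq n (i + 1)
  rw [show n + 1 - (i + 1) = n - i by omega] at this
  simpa [Nat.cast_sub h.le] using congrArg (Nat.cast (R := K)) this.symm

lemma cast_choose_succ_eq_div {n i : ℕ} (h : i ≤ n) :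
    (n.choose (i + 1) : K) = n.choose i * (n - i) / (i + 1) := by
  rw [eq_div_iff (Nat.cast_add_one_ne_zero i)]
  simpa [Nat.cast_sub h] using congrArg (Nat.cast (R := K)) (Nat.choose_succ_right_eq n i)

end CastChoose

lemma centralBinom_succ_eq_two_mul_choose (n : ℕ) :
    (n + 1).centralBinom = 2 * (2 * n + 1).choose n := by
  rw [Nat.centralBinom_eq_two_mul_choose, show 2 * (n + 1) = 2 * n + 1 + 1 by omega,
    Nat.choose_succ_succ', Nat.choose_symm_half]
  ring

def invSqChooseSum (n : ℕ) : ℚ := ∑ k ∈ Icc 1 n, 1 / ((k : ℚ) ^ 2 * (n.choose k : ℚ) ^ 2)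

def invSqChooseCert (n i : ℕ) : ℚ := (2 * i - 3 * n - 3) / ((n + 1) ^ 2 * (n.choose i : ℚ) ^ 2)

lemma invSqChoose_succ_sub_eq_cert_sub {n i : ℕ} (h : i < n) :
    2 * (2 * n + 3) / (((i + 1 : ℕ) : ℚ) ^ 2 * ((n + 1).choose (i + 1) : ℚ) ^ 2) -
        (n + 1) / (((i + 1 : ℕ) : ℚ) ^ 2 * (n.choose (i + 1) : ℚ) ^ 2) =
      invSqChooseCert n (i + 1) - invSqChooseCert n i := by
  have hc : (n.choose i : ℚ) ≠ 0 := by exact_mod_cast (Nat.choose_pos h.le).ne'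
  have hni : (n : ℚ) - i ≠ 0 := sub_ne_zero.mpr (by exact_mod_cast h.ne')
  rw [invSqChooseCert, invSqChooseCert, cast_succ_choose_succ_eq_div h,
    cast_choose_succ_eq_div h.le]
  push_cast
  field_simp
  ring

lemma sum_Icc_one_eq_sum_range {M : Type*} [AddCommMonoid M] (f : ℕ → M) (n : ℕ) :
    ∑ k ∈ Icc 1 n, f k = ∑ i ∈ range n, f (i + 1) := by
  rw [range_eq_Ico, sum_Ico_add' f 0 n 1, zero_add, Ico_add_one_right_eq_Icc]

lemma invSqChooseSum_succ (n : ℕ) :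
    2 * (2 * n + 3) * invSqChooseSum (n + 1) = (n + 1) * invSqChooseSum n + 6 / (n + 1) := by
  have htel : 2 * (2 * n + 3) * ∑ k ∈ Icc 1 n, 1 / ((k : ℚ) ^ 2 * ((n + 1).choose k : ℚ) ^ 2) -
      (n + 1) * invSqChooseSum n = invSqChooseCert n n - invSqChooseCert n 0 := by
    rw [invSqChooseSum, mul_sum, mul_sum, ← sum_sub_distrib, sum_Icc_one_eq_sum_range,
      ← sum_range_sub]
    refine sum_congr rfl fun i hi => ?_
    rw [← invSqChoose_succ_sub_eq_cert_sub (mem_range.mp hi)]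
    ring
  have hsplit : invSqChooseSum (n + 1) =
      ∑ k ∈ Icc 1 n, 1 / ((k : ℚ) ^ 2 * ((n + 1).choose k : ℚ) ^ 2) + 1 / ((n : ℚ) + 1) ^ 2 := by
    rw [invSqChooseSum, sum_Icc_succ_top (by omega)]
    simp
  rw [invSqChooseCert, invSqChooseCert, Nat.choose_self, Nat.choose_zero_right] at htel
  rw [hsplit]
  field_simp at htel ⊢
  linear_combination htel

theorem staver_centralBinom (N : ℕ) :
    ∑ k ∈ Icc 1 N, (k.centralBinom : ℚ) / k =
      (N + 1) * (N + 1).centralBinom * invSqChooseSum N / 6 := by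
  induction N with
  | zero => simp [invSqChooseSum]
  | succ n ih =>
    rw [sum_Icc_succ_top (by omega), ih]
    have hcb : ((n : ℚ) + 2) * (n + 2).centralBinom = 2 * (2 * n + 3) * (n + 1).centralBinom := by
      exact_mod_cast Nat.succ_mul_centralBinom_succ (n + 1)
    push_cast
    linear_combination -invSqChooseSum (n + 1) / 6 * hcb -
      ((n + 1).centralBinom : ℚ) / 6 * invSqChooseSum_succ n

theorem staver_general (N : ℕ) :
    ∑ k ∈ Finset.Icc 1 N, (Nat.choose (2 * k) k : ℚ) / k =
      ((N : ℚ) + 1) / 3 * Nat.choose (2 * N + 1) N *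
        ∑ k ∈ Finset.Icc 1 N, 1 / ((k : ℚ) ^ 2 * (Nat.choose N k : ℚ) ^ 2) := by
  have h := staver_centralBinom N
  rw [centralBinom_succ_eq_two_mul_choose, invSqChooseSum] at h
  simp only [Nat.centralBinom_eq_two_mul_choose] at h
  rw [h]
  push_cast
  ring

theorem staver (N : ℕ) (hN : 0 < N) :
    ∑ k ∈ Finset.Icc 1 N, (Nat.choose (2 * k) k : ℚ) / k =
      ((N : ℚ) + 1) / 3 * Nat.choose (2 * N + 1) N *
        ∑ k ∈ Finset.Icc 1 N, 1 / ((k : ℚ) ^ 2 * (Nat.choose N k : ℚ) ^ 2) :=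
  staver_general N
end

section
/- For all nonnegative real numbers x and y, ⌊2x+2y⌋ + ⌊y⌋ ≥ ⌊x⌋ + ⌊x+y⌋ + ⌊2y⌋, where ⌊·⌋ is the floor function. -/
open Polynomial Finset

/- Hermite's identity `⌊2t⌋ = ⌊t⌋ + ⌊t + 1/2⌋` applied to `t = y` and `t = x + y` turns the
inequality into `⌊x⌋ + ⌊y + 1/2⌋ ≤ ⌊x + y + 1/2⌋`, the superadditivity of the floor. -/

theorem Int.floor_two_mul_eq_floor_add_floor_add_half {α : Type*} [Field α] [LinearOrder α]
    [IsStrictOrderedRing α] [FloorRing α] (t : α) : ⌊2 * t⌋ = ⌊t⌋ + ⌊t + 1 / 2⌋ := by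
  have h₀ := Int.floor_le t
  have h₁ := Int.lt_floor_add_one t
  rcases lt_or_ge t (⌊t⌋ + 1 / 2) with h | h
  · have e₁ : ⌊t + 1 / 2⌋ = ⌊t⌋ := by rw [Int.floor_eq_iff]; constructor <;> linarith
    have e₂ : ⌊2 * t⌋ = 2 * ⌊t⌋ := by rw [Int.floor_eq_iff]; push_cast; constructor <;> linarith
    rw [e₁, e₂]; ring
  · have e₁ : ⌊t + 1 / 2⌋ = ⌊t⌋ + 1 := by
      rw [Int.floor_eq_iff]; push_cast; constructor <;> linarith
    have e₂ : ⌊2 * t⌋ = 2 * ⌊t⌋ + 1 := by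
      rw [Int.floor_eq_iff]; push_cast; constructor <;> linarith
    rw [e₁, e₂]; ring

theorem floor_ineq_general (x y : ℝ) :
    ⌊x⌋ + ⌊x + y⌋ + ⌊2 * y⌋ ≤ ⌊2 * x + 2 * y⌋ + ⌊y⌋ := by
  rw [← mul_add, Int.floor_two_mul_eq_floor_add_floor_add_half,
    Int.floor_two_mul_eq_floor_add_floor_add_half]
  have h := Int.le_floor_add x (y + 1 / 2)
  rw [← add_assoc] at h
  linarith

theorem floor_ineq (x y : ℝ) (hx : 0 ≤ x) (hy : 0 ≤ y) :
    ⌊x⌋ + ⌊x + y⌋ + ⌊2 * y⌋ ≤ ⌊2 * x + 2 * y⌋ + ⌊y⌋ :=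
  floor_ineq_general x y
end

section
/- For every positive integer m, binom_q(2m-1, m-1) ≡ (-1)^{m-1} q^{C(m,2)} (mod Φ_m(q)^2), as polynomials in ℤ[q]. -/
open Polynomial Finset

/-! Write `m = n + 1` and `B = ∏_{j=1}^{n} (1 - q^j)`. Then `binom_q(2m-1, m-1) · B = ∏_j (1 - q^{m+j})`
and `(-1)^n q^{C(m,2)} B = ∏_j (q^m - q^j)`. With `x = 1 - q^m`, which `Φ_m` divides, these products are
`∏_j ((1 - q^j) + x q^j)` and `∏_j ((1 - q^j) - x)`, so modulo `x²` their difference is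
`x · ∑_j (1 + q^j) ∏_{k ≠ j} (1 - q^k)`. Pairing `j` with `m - j`, the pair sum times
`(1 - q^j)(1 - q^{m-j})` is `2B(1 - q^m)`; since `Φ_m` is coprime to `1 - q^j` for `0 < j < m`, it divides
the sum, hence `Φ_m²` divides the difference, while `B` stays coprime to `Φ_m`. -/

theorem congrMod_of_mul_eq {x y : RatFunc ℚ} {P a b : ℚ[X]} (hbP : IsCoprime b P) (hPa : P ∣ a)
    (h : (x - y) * algebraMap ℚ[X] (RatFunc ℚ) b = algebraMap ℚ[X] (RatFunc ℚ) a) :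
    congrMod x y P := by
  set d := x - y
  have hcross : d.num * b = a * d.denom := by
    apply RatFunc.algebraMap_injective ℚ
    have hd := RatFunc.algebraMap_ne_zero d.denom_ne_zero
    rw [← RatFunc.num_div_denom d] at h
    rw [map_mul, map_mul, ← h]
    field_simp
  have hden : d.denom ∣ b :=
    (RatFunc.isCoprime_num_denom d).symm.dvd_of_dvd_mul_left ⟨a, hcross.trans (mul_comm _ _)⟩
  exact ⟨hbP.symm.dvd_of_dvd_mul_right (hcross ▸ hPa.mul_right _),
    hbP.of_isCoprime_of_dvd_left hden⟩

theorem sq_dvd_prod_add_mul_sub_prod_sub_mul_sum {ι R : Type*} [CommRing R] [DecidableEq ι] (s : Finset ι)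
    (a b : ι → R) (x : R) :
    x ^ 2 ∣ ∏ i ∈ s, (a i + x * b i) - ∏ i ∈ s, a i
      - x * ∑ i ∈ s, b i * ∏ k ∈ s.erase i, a k := by
  induction s using Finset.induction_on with
  | empty => simp
  | @insert i₀ s hi₀ ih =>
    obtain ⟨e, he⟩ := ih
    have herase : ∀ i ∈ s, (insert i₀ s).erase i = insert i₀ (s.erase i) := fun i hi =>
      erase_insert_of_ne (ne_of_mem_of_not_mem hi hi₀).symm
    rw [prod_insert hi₀, prod_insert hi₀, sum_insert hi₀, erase_insert hi₀,
      sum_congr rfl fun i hi => by rw [herase i hi, prod_insert fun h => hi₀ (mem_of_mem_erase h)]]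
    refine ⟨a i₀ * e + b i₀ * (∑ i ∈ s, b i * ∏ k ∈ s.erase i, a k) + x * b i₀ * e, ?_⟩
    simp only [mul_left_comm _ (a i₀), ← mul_sum]
    linear_combination (a i₀ + x * b i₀) * he

theorem prod_range_pow_succ_sub_pow {R : Type*} [CommRing R] (x : R) (n : ℕ) :
    ∏ j ∈ range n, (x ^ (n + 1) - x ^ (j + 1))
      = (-1) ^ n * x ^ ((n + 1) * n / 2) * ∏ j ∈ range n, (1 - x ^ (j + 1)) := by
  have hfactor : ∀ j ∈ range n, x ^ (n + 1) - x ^ (n - 1 - j + 1)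
      = -x ^ (n - j) * (1 - x ^ (j + 1)) := fun j hj => by
    have hj := mem_range.mp hj
    rw [show n - 1 - j + 1 = n - j by omega, mul_sub, mul_one, neg_mul, ← pow_add,
      show n - j + (j + 1) = n + 1 by omega]
    ring
  have hexp : ∑ j ∈ range n, (n - j) = (n + 1) * n / 2 := by
    rw [show (n + 1) * n / 2 = ∑ i ∈ range (n + 1), i from (sum_range_id _).symm,
      sum_range_succ', ← sum_range_reflect]
    exact sum_congr rfl fun j hj => by have := mem_range.mp hj; omega
  rw [← prod_range_reflect, prod_congr rfl hfactor, prod_mul_distrib]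
  simp only [neg_eq_neg_one_mul (x ^ _), prod_mul_distrib, prod_const, card_range,
    prod_pow_eq_pow_sum, hexp]

theorem isCoprime_cyclotomic_one_sub_X_pow {m j : ℕ} (hj : 0 < j) (hjm : j < m) :
    IsCoprime (cyclotomic m ℚ) (1 - X ^ j) := by
  rw [← neg_sub, IsCoprime.neg_right_iff, ← prod_cyclotomic_eq_X_pow_sub_one hj]
  exact IsCoprime.prod_right fun d hd =>
    cyclotomic.isCoprime_rat ((Nat.divisor_le hd).trans_lt hjm).ne'

theorem cyclotomic_dvd_sum_one_add_X_pow_mul_prod_erase (n : ℕ) :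
    cyclotomic (n + 1) ℚ ∣
      ∑ j ∈ range n, (1 + X ^ (j + 1)) * ∏ k ∈ (range n).erase j, (1 - X ^ (k + 1)) := by
  set t : ℕ → ℚ[X] := fun j => (1 + X ^ (j + 1)) * ∏ k ∈ (range n).erase j, (1 - X ^ (k + 1))
  have hpair : ∀ j ∈ range n, cyclotomic (n + 1) ℚ ∣ t j + t (n - 1 - j) := by
    intro j hj
    have hj' : n - 1 - j ∈ range n := mem_range.mpr (by have := mem_range.mp hj; omega)
    have hjn := mem_range.mp hj
    have hw : IsCoprime (cyclotomic (n + 1) ℚ) ((1 - X ^ (j + 1)) * (1 - X ^ (n - 1 - j + 1))) :=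
      (isCoprime_cyclotomic_one_sub_X_pow (by omega) (by omega)).mul_right
        (isCoprime_cyclotomic_one_sub_X_pow (by omega) (by omega))
    have e := mul_prod_erase (range n) (fun k => (1 : ℚ[X]) - X ^ (k + 1)) hj
    have e' := mul_prod_erase (range n) (fun k => (1 : ℚ[X]) - X ^ (k + 1)) hj'
    have hX : (X : ℚ[X]) ^ (j + 1) * X ^ (n - 1 - j + 1) = X ^ (n + 1) := by
      rw [← pow_add]; congr 1; omega
    refine hw.dvd_of_dvd_mul_right ?_
    rw [show (t j + t (n - 1 - j)) * ((1 - X ^ (j + 1)) * (1 - X ^ (n - 1 - j + 1)))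
        = 2 * (∏ k ∈ range n, (1 - X ^ (k + 1))) * (1 - X ^ (n + 1)) by
      simp only [t]
      linear_combination (1 + X ^ (j + 1)) * (1 - X ^ (n - 1 - j + 1)) * e
        + (1 + X ^ (n - 1 - j + 1)) * (1 - X ^ (j + 1)) * e'
        - 2 * (∏ k ∈ range n, (1 - X ^ (k + 1))) * hX]
    exact (dvd_sub_comm.mp (cyclotomic.dvd_X_pow_sub_one _ ℚ)).mul_left _
  have htwice : cyclotomic (n + 1) ℚ ∣ 2 * ∑ j ∈ range n, t j := by
    rw [two_mul]
    nth_rewrite 2 [← sum_range_reflect]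
    rw [← sum_add_distrib]
    exact dvd_sum hpair
  have htwo : IsUnit (2 : ℚ[X]) := by
    have := (isUnit_C (R := ℚ) (x := 2)).mpr (by norm_num)
    rwa [C_ofNat] at this
  exact (htwo.dvd_mul_left).mp htwice

theorem cyclotomic_sq_dvd_prod_sub_prod (n : ℕ) :
    cyclotomic (n + 1) ℚ ^ 2 ∣ ∏ j ∈ range n, (1 - X ^ (n + 1 + j + 1))
      - ∏ j ∈ range n, (X ^ (n + 1) - X ^ (j + 1)) := by
  set x : ℚ[X] := 1 - X ^ (n + 1)
  set a : ℕ → ℚ[X] := fun j => 1 - X ^ (j + 1)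
  have hx : cyclotomic (n + 1) ℚ ∣ x := dvd_sub_comm.mp (cyclotomic.dvd_X_pow_sub_one _ ℚ)
  have hT := cyclotomic_dvd_sum_one_add_X_pow_mul_prod_erase n
  obtain ⟨e, he⟩ := sq_dvd_prod_add_mul_sub_prod_sub_mul_sum (range n) a (fun j => X ^ (j + 1)) x
  obtain ⟨e', he'⟩ := sq_dvd_prod_add_mul_sub_prod_sub_mul_sum (range n) a (fun _ => -1) x
  have hG : ∏ j ∈ range n, (1 - X ^ (n + 1 + j + 1)) = ∏ j ∈ range n, (a j + x * X ^ (j + 1)) :=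
    prod_congr rfl fun j _ => by simp only [a, x]; ring
  have hR : ∏ j ∈ range n, (X ^ (n + 1) - X ^ (j + 1)) = ∏ j ∈ range n, (a j + x * -1) :=
    prod_congr rfl fun j _ => by simp only [a, x]; ring
  have hsum : ∑ j ∈ range n, X ^ (j + 1) * ∏ k ∈ (range n).erase j, a k
      - ∑ j ∈ range n, -1 * ∏ k ∈ (range n).erase j, a k
      = ∑ j ∈ range n, (1 + X ^ (j + 1)) * ∏ k ∈ (range n).erase j, a k := by
    rw [← sum_sub_distrib]
    exact sum_congr rfl fun _ _ => by ring
  rw [hG, hR, show ∏ j ∈ range n, (a j + x * X ^ (j + 1)) - ∏ j ∈ range n, (a j + x * -1)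
      = x ^ 2 * (e - e') + x * ∑ j ∈ range n, (1 + X ^ (j + 1)) * ∏ k ∈ (range n).erase j, a k by
    linear_combination he - he' + x * hsum]
  exact dvd_add (dvd_mul_of_dvd_left (pow_dvd_pow_of_dvd hx 2) _) (by rw [sq]; exact mul_dvd_mul hx hT)

theorem prod_range_one_sub_X_pow_ne_zero (M : ℕ) : ∏ j ∈ range M, (1 - X ^ (j + 1) : ℚ[X]) ≠ 0 :=
  prod_ne_zero_iff.mpr fun j _ => sub_ne_zero.mpr fun h =>
    X_pow_sub_C_ne_zero j.succ_pos (1 : ℚ) (by rw [C_1, ← h, sub_self])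

theorem qpoch_q_q_eq_algebraMap (M : ℕ) :
    qpoch q q M = algebraMap ℚ[X] (RatFunc ℚ) (∏ j ∈ range M, (1 - X ^ (j + 1))) := by
  simp only [qpoch, q, map_prod, map_sub, map_one, map_mul, map_pow, RatFunc.algebraMap_X, pow_succ']

theorem qbin_q_two_mul_add_one_mul (n : ℕ) :
    qbin q (2 * n + 1) n * algebraMap ℚ[X] (RatFunc ℚ) (∏ j ∈ range n, (1 - X ^ (j + 1)))
      = algebraMap ℚ[X] (RatFunc ℚ) (∏ j ∈ range n, (1 - X ^ (n + 1 + j + 1))) := by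
  have hne : ∀ M, algebraMap ℚ[X] (RatFunc ℚ) (∏ j ∈ range M, (1 - X ^ (j + 1))) ≠ 0 :=
    fun M => RatFunc.algebraMap_ne_zero (prod_range_one_sub_X_pow_ne_zero M)
  have := hne n
  have := hne (n + 1)
  rw [qbin, if_pos (by omega), show 2 * n + 1 - n = n + 1 by omega,
    show 2 * n + 1 = n + 1 + n by ring, qpoch_q_q_eq_algebraMap, qpoch_q_q_eq_algebraMap, qpoch_q_q_eq_algebraMap, prod_range_add, map_mul]
  field_simp

theorem neg_one_pow_mul_q_pow_C2_mul (n : ℕ) :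
    (-1) ^ n * q ^ C2 ((n + 1 : ℕ) : ℤ) * algebraMap ℚ[X] (RatFunc ℚ) (∏ j ∈ range n, (1 - X ^ (j + 1)))
      = algebraMap ℚ[X] (RatFunc ℚ) (∏ j ∈ range n, (X ^ (n + 1) - X ^ (j + 1))) := by
  have hC2 : C2 ((n + 1 : ℕ) : ℤ) = ((n + 1) * n / 2 : ℕ) := by
    simp only [C2, Int.natCast_div]
    push_cast
    ring_nf
  rw [hC2, zpow_natCast, prod_range_pow_succ_sub_pow]
  simp only [q, map_mul, map_pow, map_neg, map_one, RatFunc.algebraMap_X]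

theorem q_central_binom_congr (m : ℕ) (hm : 0 < m) :
    congrMod (qbin q (2 * m - 1) (m - 1)) ((-1) ^ (m - 1) * q ^ (C2 (m : ℤ)))
      (Polynomial.cyclotomic m ℚ ^ 2) := by
  obtain ⟨n, rfl⟩ := Nat.exists_eq_add_one_of_ne_zero hm.ne'
  have hB : IsCoprime (∏ j ∈ range n, (1 - X ^ (j + 1))) (cyclotomic (n + 1) ℚ ^ 2) :=
    (IsCoprime.prod_left fun j hj =>
      (isCoprime_cyclotomic_one_sub_X_pow j.succ_pos (by simpa using hj)).symm).pow_right
  refine congrMod_of_mul_eq hB (cyclotomic_sq_dvd_prod_sub_prod n) ?_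
  rw [show 2 * (n + 1) - 1 = 2 * n + 1 by omega, Nat.add_sub_cancel, sub_mul,
    qbin_q_two_mul_add_one_mul, neg_one_pow_mul_q_pow_C2_mul, map_sub]
end

section
/- For every positive odd integer m, binom_{q^2}(m-1, (m-1)/2) ≡ (-1)^{(m-1)/2} q^{(1-m^2)/4} (-q;q)_{m-1}^2 (mod Φ_m(q)^2), where the congruence is understood in ℚ(q): the reduced numerator of the difference is divisible by Φ_m(q)^2 and the reduced denominator is coprime to Φ_m(q). Note (1-m^2)/4 is a negative integer for m ≥ 3 so q^{(1-m^2)/4} ∈ ℚ(q). -/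
open Polynomial Finset

/-! Write `m = 2n + 1`. After clearing denominators (which are coprime to `Φ_m`), the
congruence becomes `Φ_m² ∣ q^{n(n+1)} ∏_{j<n} (1 - q^{2j+1})² - (-1)^n ∏_{j<2n} (1 - q^{2j+2})`,
and in fact `(1 - q^m)²` divides this polynomial. Put `u = q^m`. Reflecting the index,
`∏_{j<n} (u - q^{2j+2})` and `∏_{j<n} (u² - q^{2j+2})` are `(-1)^n q^{n(n+1)}` times
`∏_{j<n} (1 - q^{2j+1})` and `∏_{n≤j<2n} (1 - q^{2j+2})` respectively, and modulo `(1 - u)²`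
the square of the first product is `∏_{j<n} (1 - q^{2j+2})` times the second one. -/

theorem prod_range_two_mul {M : Type*} [CommMonoid M] (f : ℕ → M) (n : ℕ) :
    ∏ j ∈ range (2 * n), f j = (∏ j ∈ range n, f (2 * j)) * ∏ j ∈ range n, f (2 * j + 1) := by
  induction n with
  | zero => simp
  | succ k ih =>
    rw [mul_add_one, prod_range_succ, prod_range_succ, ih, prod_range_succ, prod_range_succ]
    ac_rfl

section
variable {R : Type*} [CommRing R]

/-- `(x; x²)_n` -/
def oddProd (x : R) (n : ℕ) : R := ∏ j ∈ range n, (1 - x ^ (2 * j + 1))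

/-- `(x²; x²)_n` -/
def evenProd (x : R) (n : ℕ) : R := ∏ j ∈ range n, (1 - x ^ (2 * j + 2))

theorem prod_range_pow_mul_sub_pow (x y : R) (n : ℕ) :
    ∏ j ∈ range n, (x ^ (2 * n) * y - x ^ (2 * j + 2)) =
      (-1) ^ n * x ^ (n * (n + 1)) * ∏ j ∈ range n, (1 - x ^ (2 * j) * y) := by
  have hexp : ∑ j ∈ range n, (2 * j + 2) = n * (n + 1) := by
    induction n with
    | zero => rfl
    | succ k ih => rw [sum_range_succ, ih]; ring
  have hfactor : ∀ j ∈ range n,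
      x ^ (2 * n) * y - x ^ (2 * j + 2) = -x ^ (2 * j + 2) * (1 - x ^ (2 * (n - 1 - j)) * y) := by
    intro j hj
    have : 2 * n = 2 * j + 2 + 2 * (n - 1 - j) := by grind
    rw [this, pow_add]
    ring
  rw [prod_congr rfl hfactor, prod_mul_distrib, prod_range_reflect (fun j => 1 - x ^ (2 * j) * y),
    prod_neg, prod_pow_eq_pow_sum, hexp, card_range]

theorem pow_mul_oddProd_sq_eq_of_one_sub_pow_sq_eq_zero {x : R} (n : ℕ)
    (hx : (1 - x ^ (2 * n + 1)) ^ 2 = 0) :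
    x ^ (n * (n + 1)) * oddProd x n ^ 2 = (-1) ^ n * evenProd x (2 * n) := by
  set u := x ^ (2 * n + 1) with hu
  have hunit : IsUnit (x ^ (n * (n + 1))) := by
    have : IsUnit u := by
      simpa using (show IsNilpotent (1 - u) from ⟨2, hx⟩).isUnit_one_sub
    exact (isUnit_pow_iff (by omega)).mp this |>.pow _
  have hlower : ∏ j ∈ range n, (u - x ^ (2 * j + 2)) =
      (-1) ^ n * x ^ (n * (n + 1)) * oddProd x n := by
    simpa only [hu, oddProd, pow_succ, ← pow_succ] using prod_range_pow_mul_sub_pow x x n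
  have hupper : ∏ j ∈ range n, (u ^ 2 - x ^ (2 * j + 2)) =
      (-1) ^ n * x ^ (n * (n + 1)) * ∏ j ∈ range n, (1 - x ^ (2 * (n + j) + 2)) := by
    convert prod_range_pow_mul_sub_pow x (x ^ (2 * n + 2)) n using 3 with j
    · rw [hu, ← pow_mul, ← pow_add]; ring_nf
    · rw [← pow_add]; ring_nf
  -- `(u - a) ^ 2 = (1 - a) * (u ^ 2 - a) + a * (1 - u) ^ 2`
  have hsq : (∏ j ∈ range n, (u - x ^ (2 * j + 2))) ^ 2 =
      evenProd x n * ∏ j ∈ range n, (u ^ 2 - x ^ (2 * j + 2)) := by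
    rw [evenProd, ← prod_pow, ← prod_mul_distrib]
    refine prod_congr rfl fun j _ => ?_
    linear_combination x ^ (2 * j + 2) * hx
  have hsign : ((-1 : R) ^ n) ^ 2 = 1 := by rw [← pow_mul, mul_comm, pow_mul, neg_one_sq, one_pow]
  rw [hlower, hupper] at hsq
  apply hunit.mul_left_cancel
  rw [evenProd, two_mul, prod_range_add, ← evenProd]
  linear_combination hsq - (x ^ (n * (n + 1)) * oddProd x n) ^ 2 * hsign

theorem one_sub_X_pow_sq_dvd (n : ℕ) :
    (1 - X ^ (2 * n + 1) : R[X]) ^ 2 ∣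
      X ^ (n * (n + 1)) * oddProd X n ^ 2 - (-1) ^ n * evenProd X (2 * n) := by
  let mk := Ideal.Quotient.mk (Ideal.span {(1 - X ^ (2 * n + 1) : R[X]) ^ 2})
  rw [← Ideal.Quotient.eq_zero_iff_dvd, map_sub, sub_eq_zero]
  simpa [mk, oddProd, evenProd] using
    pow_mul_oddProd_sq_eq_of_one_sub_pow_sq_eq_zero (x := mk X) n
      (by rw [← map_pow, ← map_one mk, ← map_sub, ← map_pow]
          exact Ideal.Quotient.mk_singleton_self _)

end

theorem isCoprime_prod_one_sub_X_pow_cyclotomic {m : ℕ} {s : Finset ℕ} {e : ℕ → ℕ}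
    (he : ∀ j ∈ s, 0 < e j ∧ e j < m) :
    IsCoprime (∏ j ∈ s, (1 - X ^ e j) : ℚ[X]) (cyclotomic m ℚ) := by
  refine IsCoprime.prod_left fun j hj => ?_
  obtain ⟨hpos, hlt⟩ := he j hj
  rw [← neg_sub, IsCoprime.neg_left_iff, ← prod_cyclotomic_eq_X_pow_sub_one hpos]
  exact IsCoprime.prod_left fun d hd =>
    cyclotomic.isCoprime_rat (Nat.le_of_dvd hpos (Nat.mem_divisors.mp hd).1 |>.trans_lt hlt).ne

theorem isCoprime_X_cyclotomic {m : ℕ} (hm : 0 < m) : IsCoprime (X : ℚ[X]) (cyclotomic m ℚ) := by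
  have : IsCoprime (X : ℚ[X]) (X ^ m - 1) :=
    ⟨X ^ (m - 1), -1, by rw [pow_sub_one_mul hm.ne']; ring⟩
  exact this.of_isCoprime_of_dvd_right (cyclotomic.dvd_X_pow_sub_one m ℚ)

local notation "ι" => algebraMap ℚ[X] (RatFunc ℚ)

theorem congrMod_of_sub_eq_div {x y : RatFunc ℚ} {P a b : ℚ[X]} (hb : IsCoprime b P)
    (h : x - y = ι (P * a) / ι b) : congrMod x y P := by
  rcases eq_or_ne b 0 with rfl | hb0
  · rw [map_zero, div_zero] at h
    simp [congrMod, h, isCoprime_one_left]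
  refine ⟨?_, hb.of_isCoprime_of_dvd_left (h ▸ RatFunc.denom_div_dvd _ _)⟩
  have hnum : (x - y).num * b = P * a * (x - y).denom := by
    apply RatFunc.algebraMap_injective ℚ
    have := (RatFunc.num_div_denom (x - y)).trans h
    rw [div_eq_div_iff (RatFunc.algebraMap_ne_zero (RatFunc.denom_ne_zero _))
      (RatFunc.algebraMap_ne_zero hb0)] at this
    simpa only [map_mul] using this
  exact hb.symm.dvd_of_dvd_mul_right ⟨a * (x - y).denom, by rw [hnum]; ring⟩

theorem qpoch_q_sq (M : ℕ) : qpoch (q ^ 2) (q ^ 2) M = ι (evenProd X M) := by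
  simp only [qpoch, evenProd, q, map_prod, map_sub, map_one, map_pow, RatFunc.algebraMap_X]
  exact prod_congr rfl fun j _ => by ring

theorem qpoch_neg_q_mul_oddProd_mul_evenProd (n : ℕ) :
    qpoch (-q) q (2 * n) * (ι (oddProd X n) * ι (evenProd X n)) = ι (evenProd X (2 * n)) := by
  rw [← map_mul, oddProd, evenProd, ← prod_range_two_mul (fun j => 1 - X ^ (j + 1))]
  simp only [qpoch, evenProd, q, map_prod, map_sub, map_one, map_pow, RatFunc.algebraMap_X,
    ← prod_mul_distrib]
  exact prod_congr rfl fun j _ => by ring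

theorem q_zpow_one_sub_sq_div_four (n : ℕ) :
    q ^ ((1 - ((2 * n + 1 : ℕ) : ℤ) ^ 2) / 4) = (ι (X ^ (n * (n + 1))))⁻¹ := by
  have : (1 - ((2 * n + 1 : ℕ) : ℤ) ^ 2) / 4 = -(n * (n + 1) : ℕ) := by
    push_cast
    rw [show 1 - (2 * (n : ℤ) + 1) ^ 2 = 4 * -(n * (n + 1)) by ring,
      Int.mul_ediv_cancel_left _ (by norm_num)]
  rw [this, zpow_neg, zpow_natCast, map_pow, RatFunc.algebraMap_X, q]

theorem qbin_sub_eq_div (n : ℕ) :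
    qbin (q ^ 2) (2 * n) n - (-1) ^ n * (ι (X ^ (n * (n + 1))))⁻¹ * qpoch (-q) q (2 * n) ^ 2 =
      ι ((X ^ (n * (n + 1)) * oddProd X n ^ 2 - (-1) ^ n * evenProd X (2 * n)) *
          evenProd X (2 * n)) /
        ι (X ^ (n * (n + 1)) * evenProd X n ^ 2 * oddProd X n ^ 2) := by
  have hne : ∀ (f : ℕ → ℕ), (∀ j, f j ≠ 0) → ι (∏ j ∈ range n, (1 - X ^ f j)) ≠ 0 :=
    fun f hf => RatFunc.algebraMap_ne_zero fun h => by
      simpa [eval_prod, zero_pow (hf _)] using congrArg (eval 0) h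
  have hodd : ι (oddProd X n) ≠ 0 := hne _ fun _ => by omega
  have heven : ι (evenProd X n) ≠ 0 := hne _ fun _ => by omega
  have hX : ι X ≠ 0 := RatFunc.algebraMap_ne_zero X_ne_zero
  have hqbin : qbin (q ^ 2) (2 * n) n = ι (evenProd X (2 * n)) / ι (evenProd X n) ^ 2 := by
    rw [qbin, if_pos (by omega), show 2 * n - n = n by omega, qpoch_q_sq, qpoch_q_sq, sq]
  have hqpoch :
      qpoch (-q) q (2 * n) = ι (evenProd X (2 * n)) / (ι (oddProd X n) * ι (evenProd X n)) := by
    rw [eq_div_iff (mul_ne_zero hodd heven), qpoch_neg_q_mul_oddProd_mul_evenProd]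
  rw [hqbin, hqpoch]
  simp only [map_mul, map_sub, map_pow, map_neg, map_one]
  field_simp

theorem q_half_binom_congr_general (m : ℕ) (hodd : Odd m) :
    congrMod (qbin (q ^ 2) (m - 1) ((m - 1) / 2))
      ((-1) ^ ((m - 1) / 2) * q ^ ((1 - (m : ℤ) ^ 2) / 4) * qpoch (-q) q (m - 1) ^ 2)
      (Polynomial.cyclotomic m ℚ ^ 2) := by
  obtain ⟨n, rfl⟩ := hodd
  rw [show 2 * n + 1 - 1 = 2 * n by omega, show 2 * n / 2 = n by omega, q_zpow_one_sub_sq_div_four]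
  obtain ⟨w, hw⟩ :=
    (pow_dvd_pow_of_dvd (dvd_sub_comm.mp (cyclotomic.dvd_X_pow_sub_one _ ℚ)) 2).trans
      (one_sub_X_pow_sq_dvd (R := ℚ) n)
  have hoddProd : IsCoprime (oddProd X n) (cyclotomic (2 * n + 1) ℚ) :=
    isCoprime_prod_one_sub_X_pow_cyclotomic fun j hj => by rw [mem_range] at hj; omega
  have hevenProd : IsCoprime (evenProd X n) (cyclotomic (2 * n + 1) ℚ) :=
    isCoprime_prod_one_sub_X_pow_cyclotomic fun j hj => by rw [mem_range] at hj; omega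
  have hX := isCoprime_X_cyclotomic (m := 2 * n + 1) (by omega)
  have hdiff := qbin_sub_eq_div n
  rw [hw, mul_assoc (cyclotomic _ ℚ ^ 2)] at hdiff
  refine congrMod_of_sub_eq_div ?_ hdiff
  exact ((hX.pow_left.mul_left hevenProd.pow_left).mul_left hoddProd.pow_left).pow_right

theorem q_half_binom_congr (m : ℕ) (hm : 0 < m) (hodd : Odd m) :
    congrMod (qbin (q ^ 2) (m - 1) ((m - 1) / 2))
      ((-1) ^ ((m - 1) / 2) * q ^ ((1 - (m : ℤ) ^ 2) / 4) * qpoch (-q) q (m - 1) ^ 2)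
      (Polynomial.cyclotomic m ℚ ^ 2) :=
  q_half_binom_congr_general m hodd
end
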